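/- Let Y, Z be independent Gamma random variables with shapes m₁, m₂ ∈ ℕ₊ and rates c₁, a₁ > 0 respectively, and let X be an independent Gamma random variable with integer shape m ≥ 1 and rate λ > 0. Then for constants b₁ ≥ 0, b₂, b₃ > 0, P(X < b₂/λ · Y + b₃/λ · Z + b₁/λ) = 1 - ∑_{k=0}^{m-1} ∑_{l=0}^{k} ∑_{p=0}^{l} C(k,l) C(l,p) · e^{-b₁} b₁^{l-p} b₂^{k-l} b₃^{p} · (a₁^{m₂} Γ(m₂+p) / (Γ(m₂) (a₁+b₃)^{m₂+p})) · (c₁^{m₁} Γ(m₁+k-l) / (Γ(m₁) (b₂+c₁)^{m₁+k-l})) / k!. -/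

import Mathlib

/-!
For an integer shape `m`, the Gamma(`m`, `λ`) distribution function is
`P(X < t) = 1 - e^{-λt} ∑_{k<m} (λt)^k / k!`. Conditioning on `(Y, Z)` turns the outage
probability into `1 - E[e^{-U} ∑_{k<m} U^k / k!]` with `U = b₂Y + b₃Z + b₁`. Expanding `U^k` by the
binomial theorem twice splits every term into a function of `Y` times a function of `Z`, and
`E[Y^j e^{-sY}] = r^a Γ(a+j) / (Γ(a) (s+r)^(a+j))` for `Y ~ Gamma(a, r)`, because
`y^j e^{-sy}` times the Gamma(`a`, `r`) density is that constant times the Gamma(`a+j`, `s+r`)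
density.
-/

open MeasureTheory ProbabilityTheory Real
open Set Finset
open scoped Nat

theorem MeasureTheory.Measure.measureReal_prod_apply_symm {α β : Type*} [MeasurableSpace α]
    [MeasurableSpace β] {μ : Measure α} {ν : Measure β} [IsFiniteMeasure μ] [SFinite ν]
    {s : Set (α × β)} (hs : MeasurableSet s) :
    (μ.prod ν).real s = ∫ y, μ.real ((fun x ↦ (x, y)) ⁻¹' s) ∂ν := by
  rw [measureReal_def, Measure.prod_apply_symm hs, ← integral_toReal
    (measurable_measure_prodMk_right hs).aemeasurable (ae_of_all _ fun _ ↦ measure_lt_top _ _)]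
  rfl

namespace ProbabilityTheory

variable {a r : ℝ}

instance (a r : ℝ) : SFinite (gammaMeasure a r) := by
  rw [gammaMeasure]; infer_instance

lemma ae_nonneg_gammaMeasure (a r : ℝ) : ∀ᵐ x ∂gammaMeasure a r, 0 ≤ x := by
  simp only [ae_iff, not_le]
  change gammaMeasure a r (Iio 0) = 0
  rw [gammaMeasure, withDensity_apply _ measurableSet_Iio]
  exact lintegral_gammaPDF_of_nonpos le_rfl

lemma measurable_gammaPDF (a r : ℝ) : Measurable (gammaPDF a r) :=
  (measurable_gammaPDFReal a r).ennreal_ofReal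

lemma integrable_gammaPDFReal (ha : 0 < a) (hr : 0 < r) : Integrable (gammaPDFReal a r) :=
  (integrable_toReal_of_lintegral_ne_top (measurable_gammaPDF a r).aemeasurable
    (by simp [lintegral_gammaPDF_eq_one ha hr])).congr
    (ae_of_all _ fun x ↦ ENNReal.toReal_ofReal (gammaPDFReal_nonneg ha hr x))

lemma integral_gammaPDFReal (ha : 0 < a) (hr : 0 < r) : ∫ x, gammaPDFReal a r x = 1 := by
  rw [integral_eq_lintegral_of_nonneg_ae (ae_of_all _ (gammaPDFReal_nonneg ha hr)) (by fun_prop)]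
  change (∫⁻ x, gammaPDF a r x).toReal = 1
  simp [lintegral_gammaPDF_eq_one ha hr]

lemma integral_gammaMeasure (ha : 0 < a) (hr : 0 < r) (f : ℝ → ℝ) :
    ∫ x, f x ∂gammaMeasure a r = ∫ x, gammaPDFReal a r x * f x := by
  rw [gammaMeasure, integral_withDensity_eq_integral_toReal_smul (measurable_gammaPDF a r)
    (ae_of_all _ fun _ ↦ ENNReal.ofReal_lt_top)]
  simp [gammaPDF, ENNReal.toReal_ofReal (gammaPDFReal_nonneg ha hr _)]

lemma integrable_gammaMeasure_iff (ha : 0 < a) (hr : 0 < r) {f : ℝ → ℝ} :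
    Integrable f (gammaMeasure a r) ↔ Integrable (fun x ↦ gammaPDFReal a r x * f x) := by
  rw [gammaMeasure, integrable_withDensity_iff_integrable_smul' (measurable_gammaPDF a r)
    (ae_of_all _ fun _ ↦ ENNReal.ofReal_lt_top)]
  simp [gammaPDF, ENNReal.toReal_ofReal (gammaPDFReal_nonneg ha hr _)]

lemma gammaPDFReal_mul_pow_mul_exp (ha : 0 < a) {s : ℝ} (hsr : 0 < s + r) (j : ℕ) {x : ℝ}
    (hx : x ≠ 0) :
    gammaPDFReal a r x * (x ^ j * exp (-(s * x)))
      = r ^ a * Gamma (a + j) / (Gamma a * (s + r) ^ (a + j))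
        * gammaPDFReal (a + j) (s + r) x := by
  unfold gammaPDFReal
  split_ifs with h0
  · have hx0 : 0 < x := lt_of_le_of_ne h0 (Ne.symm hx)
    have hpow : x ^ (a + j - 1) = x ^ (a - 1) * x ^ j := by
      rw [← rpow_natCast, ← rpow_add hx0]; ring_nf
    have hexp : exp (-((s + r) * x)) = exp (-(r * x)) * exp (-(s * x)) := by
      rw [← exp_add]; ring_nf
    have hΓ : Gamma (a + j) ≠ 0 := (Gamma_pos_of_pos (by positivity)).ne'
    have hsr' : (s + r) ^ (a + j) ≠ 0 := (rpow_pos_of_pos hsr _).ne'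
    rw [hpow, hexp]
    field_simp
  · simp

lemma integrable_pow_mul_exp_gammaMeasure (ha : 0 < a) (hr : 0 < r) {s : ℝ} (hsr : 0 < s + r)
    (j : ℕ) : Integrable (fun x ↦ x ^ j * exp (-(s * x))) (gammaMeasure a r) := by
  rw [integrable_gammaMeasure_iff ha hr]
  refine ((integrable_gammaPDFReal (a := a + j) (by positivity) hsr).const_mul
    (r ^ a * Gamma (a + j) / (Gamma a * (s + r) ^ (a + j)))).congr ?_
  filter_upwards [volume.ae_ne 0] with x hx
  exact (gammaPDFReal_mul_pow_mul_exp ha hsr j hx).symm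

lemma integral_pow_mul_exp_gammaMeasure (ha : 0 < a) (hr : 0 < r) {s : ℝ} (hsr : 0 < s + r)
    (j : ℕ) :
    ∫ x, x ^ j * exp (-(s * x)) ∂gammaMeasure a r
      = r ^ a * Gamma (a + j) / (Gamma a * (s + r) ^ (a + j)) := by
  rw [integral_gammaMeasure ha hr]
  calc _ = ∫ x, r ^ a * Gamma (a + j) / (Gamma a * (s + r) ^ (a + j))
        * gammaPDFReal (a + j) (s + r) x := by
          refine integral_congr_ae ?_
          filter_upwards [volume.ae_ne 0] with x hx
          exact gammaPDFReal_mul_pow_mul_exp ha hsr j hx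
    _ = _ := by rw [integral_const_mul, integral_gammaPDFReal (by positivity) hsr, mul_one]

lemma integral_pow_mul_exp_gammaMeasure_natCast {m : ℕ} (hm : 0 < m) (hr : 0 < r) {s : ℝ}
    (hsr : 0 < s + r) (j : ℕ) :
    ∫ x, x ^ j * exp (-(s * x)) ∂gammaMeasure m r
      = r ^ m * Gamma (m + j) / (Gamma m * (s + r) ^ (m + j)) := by
  rw [integral_pow_mul_exp_gammaMeasure (by positivity) hr hsr, rpow_natCast, ← Nat.cast_add,
    rpow_natCast, Nat.cast_add]

/-- `erlangTail n u = P(Gamma(n, 1) ≥ u) = P(Poisson(u) < n)`. -/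
noncomputable def erlangTail (n : ℕ) (u : ℝ) : ℝ := exp (-u) * ∑ k ∈ range n, u ^ k / k !

lemma erlangTail_succ_zero (n : ℕ) : erlangTail (n + 1) 0 = 1 := by
  simp [erlangTail, sum_range_succ']

lemma hasDerivAt_erlangTail_succ (n : ℕ) (u : ℝ) :
    HasDerivAt (erlangTail (n + 1)) (-(exp (-u) * u ^ n / n !)) u := by
  induction n with
  | zero =>
    have h1 : erlangTail 1 = fun u ↦ exp (-u) := by ext; simp [erlangTail]
    simpa [h1] using (hasDerivAt_neg u).exp
  | succ n ih =>
    have hsplit : erlangTail (n + 2)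
        = fun u ↦ erlangTail (n + 1) u + exp (-u) * (u ^ (n + 1) / (n + 1)!) := by
      ext v; simp only [erlangTail, sum_range_succ _ (n + 1)]; ring
    rw [hsplit]
    refine (ih.add ((hasDerivAt_neg u).exp.mul
      ((hasDerivAt_pow (n + 1) u).div_const ((n + 1)! : ℝ)))).congr_deriv ?_
    rw [Nat.factorial_succ]
    push_cast
    field_simp
    ring

lemma gammaPDFReal_natCast_succ (n : ℕ) (r : ℝ) {x : ℝ} (hx : 0 ≤ x) :
    gammaPDFReal (n + 1 : ℕ) r x = r ^ (n + 1) / n ! * x ^ n * exp (-(r * x)) := by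
  rw [gammaPDFReal, if_pos hx, rpow_natCast, Nat.cast_succ, Gamma_nat_eq_factorial,
    add_sub_cancel_right, rpow_natCast]

lemma measureReal_gammaMeasure_Iio {m : ℕ} (hm : 0 < m) (hr : 0 < r) {t : ℝ} (ht : 0 ≤ t) :
    (gammaMeasure m r).real (Iio t) = 1 - erlangTail m (r * t) := by
  obtain ⟨n, rfl⟩ := Nat.exists_eq_add_one_of_ne_zero hm.ne'
  have : IsProbabilityMeasure (gammaMeasure (n + 1 : ℕ) r) :=
    isProbabilityMeasure_gammaMeasure (by positivity) hr
  have hderiv (x : ℝ) : HasDerivAt (fun x ↦ 1 - erlangTail (n + 1) (r * x))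
      (r ^ (n + 1) / n ! * x ^ n * exp (-(r * x))) x := by
    refine (((hasDerivAt_erlangTail_succ n (r * x)).comp x
      ((hasDerivAt_id x).const_mul r)).const_sub 1).congr_deriv ?_
    simp only [mul_one, mul_pow]
    ring
  calc (gammaMeasure (n + 1 : ℕ) r).real (Iio t)
      = (gammaMeasure (n + 1 : ℕ) r).real (Iic t) :=
        measureReal_congr ((withDensity_absolutelyContinuous _ _).ae_eq Iio_ae_eq_Iic)
    _ = ∫ x in Iic t, gammaPDFReal (n + 1 : ℕ) r x := by
        rw [← cdf_eq_real, cdf_gammaMeasure_eq_integral (by positivity) hr]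
    _ = ∫ x in Icc 0 t, gammaPDFReal (n + 1 : ℕ) r x :=
        setIntegral_eq_of_subset_of_forall_sdiff_eq_zero measurableSet_Iic Icc_subset_Iic_self
          fun x hx ↦ if_neg fun h0 ↦ hx.2 ⟨h0, hx.1⟩
    _ = ∫ x in 0..t, r ^ (n + 1) / n ! * x ^ n * exp (-(r * x)) := by
        rw [integral_Icc_eq_integral_Ioc, ← intervalIntegral.integral_of_le ht]
        refine intervalIntegral.integral_congr fun x hx ↦ gammaPDFReal_natCast_succ n r ?_
        exact (uIcc_of_le ht ▸ hx).1
    _ = 1 - erlangTail (n + 1) (r * t) := by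
        rw [intervalIntegral.integral_eq_sub_of_hasDerivAt (fun x _ ↦ hderiv x)
          ((by fun_prop : Continuous _).intervalIntegrable _ _)]
        simp [erlangTail_succ_zero]

lemma exp_neg_mul_pow_eq_sum (k : ℕ) (b₁ b₂ b₃ y z : ℝ) :
    exp (-(b₂ * y + b₃ * z + b₁)) * (b₂ * y + b₃ * z + b₁) ^ k
      = ∑ l ∈ range (k + 1), ∑ p ∈ range (l + 1),
          k.choose l * l.choose p * exp (-b₁) * b₁ ^ (l - p) * b₂ ^ (k - l) * b₃ ^ p
            * ((y ^ (k - l) * exp (-(b₂ * y))) * (z ^ p * exp (-(b₃ * z)))) := by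
  rw [show b₂ * y + b₃ * z + b₁ = (b₃ * z + b₁) + b₂ * y by ring, add_pow, mul_sum]
  refine sum_congr rfl fun l _ ↦ ?_
  rw [add_pow, sum_mul, sum_mul, mul_sum]
  refine sum_congr rfl fun p _ ↦ ?_
  rw [show -((b₃ * z + b₁) + b₂ * y) = -(b₂ * y) + (-(b₃ * z) + -b₁) by ring,
    exp_add, exp_add, mul_pow b₃ z, mul_pow b₂ y]
  ring

lemma erlangTail_linear_eq_sum (n : ℕ) (b₁ b₂ b₃ y z : ℝ) :
    erlangTail n (b₂ * y + b₃ * z + b₁)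
      = ∑ k ∈ range n, ∑ l ∈ range (k + 1), ∑ p ∈ range (l + 1),
          k.choose l * l.choose p * exp (-b₁) * b₁ ^ (l - p) * b₂ ^ (k - l) * b₃ ^ p / k !
            * ((y ^ (k - l) * exp (-(b₂ * y))) * (z ^ p * exp (-(b₃ * z)))) := by
  rw [erlangTail, mul_sum]
  refine sum_congr rfl fun k _ ↦ ?_
  rw [← mul_div_assoc, exp_neg_mul_pow_eq_sum, sum_div]
  refine sum_congr rfl fun l _ ↦ ?_
  rw [sum_div]
  refine sum_congr rfl fun p _ ↦ ?_
  ring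

lemma integrable_pow_mul_exp_gammaMeasure_prod {m₁ m₂ : ℕ} (hm₁ : 0 < m₁) (hm₂ : 0 < m₂)
    {c₁ a₁ b₂ b₃ : ℝ} (hc₁ : 0 < c₁) (ha₁ : 0 < a₁) (hb₂ : 0 ≤ b₂) (hb₃ : 0 ≤ b₃) (i j : ℕ) :
    Integrable (fun w : ℝ × ℝ ↦ (w.1 ^ i * exp (-(b₂ * w.1))) * (w.2 ^ j * exp (-(b₃ * w.2))))
      ((gammaMeasure m₁ c₁).prod (gammaMeasure m₂ a₁)) :=
  (integrable_pow_mul_exp_gammaMeasure (by positivity) hc₁ (by positivity) i).mul_prod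
    (integrable_pow_mul_exp_gammaMeasure (by positivity) ha₁ (by positivity) j)

lemma integrable_erlangTail_gammaMeasure_prod (n : ℕ) {m₁ m₂ : ℕ} (hm₁ : 0 < m₁) (hm₂ : 0 < m₂)
    {c₁ a₁ b₂ b₃ : ℝ} (hc₁ : 0 < c₁) (ha₁ : 0 < a₁) (hb₂ : 0 ≤ b₂) (hb₃ : 0 ≤ b₃) (b₁ : ℝ) :
    Integrable (fun w : ℝ × ℝ ↦ erlangTail n (b₂ * w.1 + b₃ * w.2 + b₁))
      ((gammaMeasure m₁ c₁).prod (gammaMeasure m₂ a₁)) := by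
  simp_rw [erlangTail_linear_eq_sum]
  exact integrable_finsetSum _ fun k _ ↦ integrable_finsetSum _ fun l _ ↦
    integrable_finsetSum _ fun p _ ↦
      (integrable_pow_mul_exp_gammaMeasure_prod hm₁ hm₂ hc₁ ha₁ hb₂ hb₃ _ _).const_mul _

lemma integral_erlangTail_gammaMeasure_prod (n : ℕ) {m₁ m₂ : ℕ} (hm₁ : 0 < m₁) (hm₂ : 0 < m₂)
    {c₁ a₁ b₂ b₃ : ℝ} (hc₁ : 0 < c₁) (ha₁ : 0 < a₁) (hb₂ : 0 ≤ b₂) (hb₃ : 0 ≤ b₃) (b₁ : ℝ) :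
    ∫ w, erlangTail n (b₂ * w.1 + b₃ * w.2 + b₁) ∂(gammaMeasure m₁ c₁).prod (gammaMeasure m₂ a₁)
      = ∑ k ∈ range n, ∑ l ∈ range (k + 1), ∑ p ∈ range (l + 1),
        (k.choose l : ℝ) * (l.choose p : ℝ) * exp (-b₁) * b₁ ^ (l - p) * b₂ ^ (k - l) * b₃ ^ p
          * (a₁ ^ m₂ * Gamma ((m₂ : ℝ) + p) / (Gamma m₂ * (a₁ + b₃) ^ (m₂ + p)))
          * (c₁ ^ m₁ * Gamma ((m₁ : ℝ) + (k - l : ℕ)) / (Gamma m₁ * (b₂ + c₁) ^ (m₁ + (k - l))))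
          / k ! := by
  have hterm := integrable_pow_mul_exp_gammaMeasure_prod hm₁ hm₂ hc₁ ha₁ hb₂ hb₃
  simp_rw [erlangTail_linear_eq_sum]
  rw [integral_finsetSum _ fun k _ ↦ integrable_finsetSum _ fun l _ ↦
    integrable_finsetSum _ fun p _ ↦ (hterm _ _).const_mul _]
  refine sum_congr rfl fun k _ ↦ ?_
  rw [integral_finsetSum _ fun l _ ↦ integrable_finsetSum _ fun p _ ↦ (hterm _ _).const_mul _]
  refine sum_congr rfl fun l _ ↦ ?_
  rw [integral_finsetSum _ fun p _ ↦ (hterm _ _).const_mul _]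
  refine sum_congr rfl fun p _ ↦ ?_
  rw [integral_const_mul, integral_prod_mul (fun y ↦ y ^ (k - l) * exp (-(b₂ * y)))
      (fun z ↦ z ^ p * exp (-(b₃ * z))),
    integral_pow_mul_exp_gammaMeasure_natCast hm₁ hc₁ (by positivity),
    integral_pow_mul_exp_gammaMeasure_natCast hm₂ ha₁ (by positivity), add_comm b₃ a₁]
  ring

end ProbabilityTheory

/-- Closed-form outage probability (Theorem 1, common stream): for independent Gamma
random variables `X ~ Gamma(m, λ)`, `Y ~ Gamma(m₁, c₁)`, `Z ~ Gamma(m₂, a₁)`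
(independence encoded by the product measure), and constants `b₁ ≥ 0`, `b₂, b₃ > 0`,
`P(X < b₂/λ·Y + b₃/λ·Z + b₁/λ)` equals the triple-sum closed form. -/
theorem outage_closed_form
    (m m₁ m₂ : ℕ) (hm : 1 ≤ m) (hm₁ : 1 ≤ m₁) (hm₂ : 1 ≤ m₂)
    (lam c₁ a₁ : ℝ) (hlam : 0 < lam) (hc₁ : 0 < c₁) (ha₁ : 0 < a₁)
    (b₁ b₂ b₃ : ℝ) (hb₁ : 0 ≤ b₁) (hb₂ : 0 < b₂) (hb₃ : 0 < b₃) :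
    (((gammaMeasure (m : ℝ) lam).prod
        ((gammaMeasure (m₁ : ℝ) c₁).prod (gammaMeasure (m₂ : ℝ) a₁)))
      {q : ℝ × ℝ × ℝ | q.1 < b₂ / lam * q.2.1 + b₃ / lam * q.2.2 + b₁ / lam}).toReal
    = 1 - ∑ k ∈ Finset.range m, ∑ l ∈ Finset.range (k + 1), ∑ p ∈ Finset.range (l + 1),
        (Nat.choose k l : ℝ) * (Nat.choose l p : ℝ)
          * Real.exp (-b₁) * b₁ ^ (l - p) * b₂ ^ (k - l) * b₃ ^ p
          * (a₁ ^ m₂ * Real.Gamma ((m₂ : ℝ) + p)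
              / (Real.Gamma m₂ * (a₁ + b₃) ^ (m₂ + p)))
          * (c₁ ^ m₁ * Real.Gamma ((m₁ : ℝ) + (k - l : ℕ))
              / (Real.Gamma m₁ * (b₂ + c₁) ^ (m₁ + (k - l))))
          / (Nat.factorial k) := by
  set ν := (gammaMeasure (m₁ : ℝ) c₁).prod (gammaMeasure (m₂ : ℝ) a₁)
  have : IsProbabilityMeasure (gammaMeasure m lam) :=
    isProbabilityMeasure_gammaMeasure (by positivity) hlam
  have : IsProbabilityMeasure (gammaMeasure m₁ c₁) :=
    isProbabilityMeasure_gammaMeasure (by positivity) hc₁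
  have : IsProbabilityMeasure (gammaMeasure m₂ a₁) :=
    isProbabilityMeasure_gammaMeasure (by positivity) ha₁
  have hslice : ∀ᵐ w ∂ν, (gammaMeasure m lam).real
      (Iio (b₂ / lam * w.1 + b₃ / lam * w.2 + b₁ / lam))
        = 1 - erlangTail m (b₂ * w.1 + b₃ * w.2 + b₁) := by
    filter_upwards [Measure.quasiMeasurePreserving_fst.ae (ae_nonneg_gammaMeasure _ _),
      Measure.quasiMeasurePreserving_snd.ae (ae_nonneg_gammaMeasure _ _)] with w hy hz
    rw [measureReal_gammaMeasure_Iio hm hlam (by positivity)]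
    congr 2
    field_simp
  rw [← measureReal_def, Measure.measureReal_prod_apply_symm
    (measurableSet_lt measurable_fst (by fun_prop))]
  change ∫ w, (gammaMeasure m lam).real (Iio (b₂ / lam * w.1 + b₃ / lam * w.2 + b₁ / lam)) ∂ν = _
  rw [integral_congr_ae hslice, integral_sub (integrable_const 1)
    (integrable_erlangTail_gammaMeasure_prod m hm₁ hm₂ hc₁ ha₁ hb₂.le hb₃.le b₁),
    integral_erlangTail_gammaMeasure_prod m hm₁ hm₂ hc₁ ha₁ hb₂.le hb₃.le b₁]
  simp
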